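/- arXiv:1606.08341 — 7 statements merged into one kernel-verified Lean document; each statement's English description precedes it below -/
import Mathlib

section
/- The function f is non-increasing on [0,∞): for all 0 ≤ β₁ ≤ β₂ one has f(β₂) ≤ f(β₁). Moreover, if X is not ℙ-almost surely equal to a constant, then f is strictly decreasing on (0,∞). -/
open MeasureTheory Real

/-- The Laplace transform `λ_β = 𝔼[e^{-βX}]` of the conductance law. -/
noncomputable def lam {Ω : Type*} [MeasurableSpace Ω] (P : Measure Ω) (X : Ω → ℝ) (β : ℝ) : ℝ :=
  ∫ ω, Real.exp (-β * X ω) ∂P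

/-- The annealed critical point `h_a(β) = log(ℓ-1) + log λ_β`. -/
noncomputable def annealedCP {Ω : Type*} [MeasurableSpace Ω] (P : Measure Ω) (X : Ω → ℝ)
    (ℓ : ℕ) (β : ℝ) : ℝ :=
  Real.log ((ℓ : ℝ) - 1) + Real.log (lam P X β)

/-- The function `f(β) = h_a(β) + β·𝔼[X e^{-βX}]/λ_β  (= h_a(β) - β h_a'(β))`. -/
noncomputable def fDS {Ω : Type*} [MeasurableSpace Ω] (P : Measure Ω) (X : Ω → ℝ)
    (ℓ : ℕ) (β : ℝ) : ℝ :=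
  annealedCP P X ℓ β + β * (∫ ω, X ω * Real.exp (-β * X ω) ∂P) / lam P X β

/-! With `Λ = cgf X P` one has `f β = log (ℓ - 1) + F (-β)` where `F t = Λ t - t Λ'(t)`.
The cumulant generating function `Λ` is convex, its second derivative being the variance of `X`
under the exponentially tilted law, and strictly convex unless `X` is a.s. constant.
For a convex differentiable `φ` and `s < t ≤ 0`, the tangent line at `s` gives
`φ t - φ s ≥ φ'(s) (t - s)`, hence `F t - F s ≥ -t (φ'(t) - φ'(s)) ≥ 0` by monotonicity of `φ'`,
with strict inequality when `φ` is strictly convex. -/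

open Set ProbabilityTheory

section SubMulDeriv

variable {S : Set ℝ} {φ : ℝ → ℝ}

theorem ConvexOn.monotoneOn_sub_mul_deriv (hφ : ConvexOn ℝ S φ)
    (hd : ∀ x ∈ S, DifferentiableAt ℝ φ x) :
    MonotoneOn (fun t ↦ φ t - t * deriv φ t) (S ∩ Iic 0) := by
  intro s hs t ht hst
  rcases hst.eq_or_lt with rfl | hst
  · rfl
  have htangent := hφ.deriv_le_slope hs.1 ht.1 hst (hd s hs.1)
  rw [slope_def_field, le_div_iff₀ (sub_pos.2 hst)] at htangent
  have hmono := hφ.monotoneOn_deriv hd hs.1 ht.1 hst.le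
  nlinarith [mul_le_mul_of_nonpos_left hmono ht.2]

theorem StrictConvexOn.strictMonoOn_sub_mul_deriv (hφ : StrictConvexOn ℝ S φ)
    (hd : ∀ x ∈ S, DifferentiableAt ℝ φ x) :
    StrictMonoOn (fun t ↦ φ t - t * deriv φ t) (S ∩ Iic 0) := by
  intro s hs t ht hst
  have htangent := hφ.deriv_lt_slope hs.1 ht.1 hst (hd s hs.1)
  rw [slope_def_field, lt_div_iff₀ (sub_pos.2 hst)] at htangent
  have hmono := (hφ.strictMonoOn_deriv hd hs.1 ht.1 hst).le
  nlinarith [mul_le_mul_of_nonpos_left hmono ht.2]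

end SubMulDeriv

namespace ProbabilityTheory

variable {Ω : Type*} {m : MeasurableSpace Ω} {X : Ω → ℝ} {μ : Measure Ω} {v : ℝ}

lemma iteratedDeriv_two_cgf_nonneg (hv : v ∈ interior (integrableExpSet X μ)) :
    0 ≤ iteratedDeriv 2 (cgf X μ) v := by
  rw [iteratedDeriv_two_cgf_eq_integral hv]
  exact div_nonneg (integral_nonneg fun ω ↦ by positivity) mgf_nonneg

lemma iteratedDeriv_two_cgf_pos (hv : v ∈ interior (integrableExpSet X μ))
    (hX : ¬ ∃ c : ℝ, ∀ᵐ ω ∂μ, X ω = c) :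
    0 < iteratedDeriv 2 (cgf X μ) v := by
  have hμ : μ ≠ 0 := by
    rintro rfl
    exact hX ⟨0, by simp⟩
  set d := deriv (cgf X μ) v
  have hexp : Integrable (fun ω ↦ exp (v * X ω)) μ := interior_subset (s := integrableExpSet X μ) hv
  have hint : Integrable (fun ω ↦ (X ω - d) ^ 2 * exp (v * X ω)) μ := by
    have h1 := integrable_pow_mul_exp_of_mem_interior_integrableExpSet hv 1
    have h2 := integrable_pow_mul_exp_of_mem_interior_integrableExpSet hv 2
    refine ((h2.sub (h1.const_mul (2 * d))).add (hexp.const_mul (d ^ 2))).congr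
      (ae_of_all _ fun ω ↦ ?_)
    simp only [Pi.add_apply, Pi.sub_apply]
    ring
  have hsupp : Function.support (fun ω ↦ (X ω - d) ^ 2 * exp (v * X ω)) = {ω | X ω ≠ d} := by
    ext ω
    simp [Function.mem_support, sub_eq_zero, exp_ne_zero]
  rw [iteratedDeriv_two_cgf_eq_integral hv]
  refine div_pos ?_ (mgf_pos' hμ hexp)
  rw [integral_pos_iff_support_of_nonneg (fun ω ↦ by positivity) hint, hsupp, pos_iff_ne_zero]
  exact fun h ↦ hX ⟨d, ae_iff.2 (by simpa using h)⟩

lemma convexOn_cgf : ConvexOn ℝ (interior (integrableExpSet X μ)) (cgf X μ) := by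
  refine convexOn_of_deriv2_nonneg' convex_integrableExpSet.interior
    analyticOn_cgf.differentiableOn ?_ fun v hv ↦ ?_
  · exact fun v hv ↦ (analyticAt_cgf hv).deriv.differentiableAt.differentiableWithinAt
  · rw [← iteratedDeriv_eq_iterate]
    exact iteratedDeriv_two_cgf_nonneg hv

lemma strictConvexOn_cgf (hX : ¬ ∃ c : ℝ, ∀ᵐ ω ∂μ, X ω = c) :
    StrictConvexOn ℝ (interior (integrableExpSet X μ)) (cgf X μ) := by
  refine strictConvexOn_of_deriv2_pos convex_integrableExpSet.interior
    analyticOn_cgf.continuousOn fun v hv ↦ ?_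
  rw [interior_interior] at hv
  rw [← iteratedDeriv_eq_iterate]
  exact iteratedDeriv_two_cgf_pos hv hX

end ProbabilityTheory

lemma fDS_eq_cgf {Ω : Type*} [MeasurableSpace Ω] (P : Measure Ω) (X : Ω → ℝ) (ℓ : ℕ) {β : ℝ}
    (hβ : -β ∈ interior (integrableExpSet X P)) :
    fDS P X ℓ β = log ((ℓ : ℝ) - 1) + (cgf X P (-β) - -β * deriv (cgf X P) (-β)) := by
  rw [deriv_cgf hβ]
  simp only [fDS, annealedCP, lam, cgf, mgf]
  ring

theorem fDS_antitone_general {Ω : Type*} [MeasurableSpace Ω] (P : Measure Ω) (X : Ω → ℝ)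
    (hInt : ∀ s : ℝ, Integrable (fun ω => Real.exp (-s * X ω)) P)
    (ℓ : ℕ) :
    (∀ β₁ β₂ : ℝ, 0 ≤ β₁ → β₁ ≤ β₂ → fDS P X ℓ β₂ ≤ fDS P X ℓ β₁) ∧
    ((¬ ∃ c : ℝ, ∀ᵐ ω ∂P, X ω = c) →
      ∀ β₁ β₂ : ℝ, 0 < β₁ → β₁ < β₂ → fDS P X ℓ β₂ < fDS P X ℓ β₁) := by
  have hinterior : interior (integrableExpSet X P) = univ := by
    rw [eq_univ_of_forall (s := integrableExpSet X P) fun t ↦ by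
      simpa [integrableExpSet] using hInt (-t), interior_univ]
  have hdiff : ∀ t ∈ univ, DifferentiableAt ℝ (cgf X P) t :=
    fun t _ ↦ (analyticAt_cgf (hinterior ▸ mem_univ t)).differentiableAt
  simp only [fDS_eq_cgf P X ℓ (hinterior ▸ mem_univ _), add_le_add_iff_left, add_lt_add_iff_left]
  refine ⟨fun β₁ β₂ h₁ h₁₂ ↦ ?_, fun hX β₁ β₂ h₁ h₁₂ ↦ ?_⟩
  · exact (hinterior ▸ convexOn_cgf).monotoneOn_sub_mul_deriv hdiff
      ⟨mem_univ _, mem_Iic.2 (by linarith)⟩ ⟨mem_univ _, mem_Iic.2 (by linarith)⟩ (neg_le_neg h₁₂)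
  · exact (hinterior ▸ strictConvexOn_cgf hX).strictMonoOn_sub_mul_deriv hdiff
      ⟨mem_univ _, mem_Iic.2 (by linarith)⟩ ⟨mem_univ _, mem_Iic.2 (by linarith)⟩ (neg_lt_neg h₁₂)

/-- `f` is non-increasing on `[0,∞)`, and strictly decreasing on `(0,∞)` if `X` is not
a.s. constant. -/
theorem fDS_antitone {Ω : Type*} [MeasurableSpace Ω] (P : Measure Ω) [IsProbabilityMeasure P]
    (X : Ω → ℝ) (hX : Measurable X)
    (hInt : ∀ s : ℝ, Integrable (fun ω => Real.exp (-s * X ω)) P)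
    (ℓ : ℕ) (hℓ : 3 ≤ ℓ) :
    (∀ β₁ β₂ : ℝ, 0 ≤ β₁ → β₁ ≤ β₂ → fDS P X ℓ β₂ ≤ fDS P X ℓ β₁) ∧
    ((¬ ∃ c : ℝ, ∀ᵐ ω ∂P, X ω = c) →
      ∀ β₁ β₂ : ℝ, 0 < β₁ → β₁ < β₂ → fDS P X ℓ β₂ < fDS P X ℓ β₁) :=
  fDS_antitone_general P X hInt ℓ
end

section
/- For every β > 0 and every θ > 0, the function θ ↦ (1/θ)·log r(θ) is differentiable at θ with derivative equal to −f(θβ)/θ². Consequently this derivative is negative when f(θβ) > 0, zero when f(θβ) = 0, and positive when f(θβ) < 0. -/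
open MeasureTheory Real

/-- The fractional-moment rate `r(θ) = (ℓ-1)·𝔼[(e^{-βX}/((ℓ-1)λ_β))^θ]`. -/
noncomputable def rDS {Ω : Type*} [MeasurableSpace Ω] (P : Measure Ω) (X : Ω → ℝ)
    (ℓ : ℕ) (β θ : ℝ) : ℝ :=
  ((ℓ : ℝ) - 1) * ∫ ω, (Real.exp (-β * X ω) / (((ℓ : ℝ) - 1) * lam P X β)) ^ θ ∂P

/-!
Since `(e^{-βX}/c)^t = e^{-tβX}/c^t` with `c = (ℓ-1)λ_β`, one has
`log r(t) = h_a(tβ) - t log c`, so `(1/t) log r(t) = h_a(tβ)/t - log c`. Differentiating,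
with `h_a'(s) = -𝔼[X e^{-sX}]/λ_s` (the derivative of the moment generating function),
gives `(θβ h_a'(θβ) - h_a(θβ))/θ² = -f(θβ)/θ²`.
-/

namespace LaplaceRate

open ProbabilityTheory

variable {Ω : Type*} [MeasurableSpace Ω] {P : Measure Ω} {X : Ω → ℝ}

lemma lam_eq_mgf_comp_neg : lam P X = mgf X P ∘ Neg.neg := rfl

lemma lam_pos [NeZero P] {s : ℝ} (hs : Integrable (fun ω => exp (-s * X ω)) P) :
    0 < lam P X s :=
  integral_exp_pos hs

lemma interior_integrableExpSet_eq_univ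
    (hInt : ∀ s : ℝ, Integrable (fun ω => exp (-s * X ω)) P) :
    interior (integrableExpSet X P) = Set.univ := by
  rw [interior_eq_univ, Set.eq_univ_iff_forall]
  intro t
  simpa [integrableExpSet] using hInt (-t)

lemma hasDerivAt_lam (hInt : ∀ s : ℝ, Integrable (fun ω => exp (-s * X ω)) P) (s : ℝ) :
    HasDerivAt (lam P X) (-∫ ω, X ω * exp (-s * X ω) ∂P) s := by
  have hmgf := hasDerivAt_mgf (X := X) (μ := P) (t := -s)
    (by simp [interior_integrableExpSet_eq_univ hInt])
  rw [lam_eq_mgf_comp_neg]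
  exact (hmgf.comp s (hasDerivAt_neg s)).congr_deriv (by simp)

lemma hasDerivAt_annealedCP [NeZero P]
    (hInt : ∀ s : ℝ, Integrable (fun ω => exp (-s * X ω)) P) (ℓ : ℕ) (s : ℝ) :
    HasDerivAt (annealedCP P X ℓ) (-(∫ ω, X ω * exp (-s * X ω) ∂P) / lam P X s) s :=
  ((hasDerivAt_lam hInt s).log (lam_pos (hInt s)).ne').const_add _

lemma log_rDS [NeZero P] (hInt : ∀ s : ℝ, Integrable (fun ω => exp (-s * X ω)) P)
    {ℓ : ℕ} (hℓ : 2 ≤ ℓ) (β t : ℝ) :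
    log (rDS P X ℓ β t) = annealedCP P X ℓ (t * β) - t * log (((ℓ : ℝ) - 1) * lam P X β) := by
  have hℓ1 : (0 : ℝ) < (ℓ : ℝ) - 1 := by
    have : (2 : ℝ) ≤ ℓ := by exact_mod_cast hℓ
    linarith
  set c := ((ℓ : ℝ) - 1) * lam P X β with hc_def
  have hc : 0 < c := mul_pos hℓ1 (lam_pos (hInt β))
  have hrDS : rDS P X ℓ β t = ((ℓ : ℝ) - 1) * (lam P X (t * β) / c ^ t) := by
    have hpow (ω : Ω) : (exp (-β * X ω) / c) ^ t = exp (-(t * β) * X ω) / c ^ t := by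
      rw [div_rpow (exp_pos _).le hc.le, ← exp_mul]
      ring_nf
    rw [rDS, ← hc_def]
    simp_rw [hpow]
    rw [integral_div, lam]
  rw [hrDS, log_mul hℓ1.ne' (div_pos (lam_pos (hInt _)) (rpow_pos_of_pos hc t)).ne',
    log_div (lam_pos (hInt _)).ne' (rpow_pos_of_pos hc t).ne', log_rpow hc, annealedCP]
  ring

end LaplaceRate

open LaplaceRate in
theorem hasDerivAt_inv_log_rDS_general {Ω : Type*} [MeasurableSpace Ω] (P : Measure Ω)
    [IsProbabilityMeasure P] (X : Ω → ℝ)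
    (hInt : ∀ s : ℝ, Integrable (fun ω => Real.exp (-s * X ω)) P)
    (ℓ : ℕ) (hℓ : 3 ≤ ℓ) :
    ∀ β : ℝ, 0 < β → ∀ θ : ℝ, 0 < θ →
      HasDerivAt (fun t => (1 / t) * Real.log (rDS P X ℓ β t))
        (-(fDS P X ℓ (θ * β)) / θ ^ 2) θ ∧
      (0 < fDS P X ℓ (θ * β) → -(fDS P X ℓ (θ * β)) / θ ^ 2 < 0) ∧
      (fDS P X ℓ (θ * β) = 0 → -(fDS P X ℓ (θ * β)) / θ ^ 2 = 0) ∧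
      (fDS P X ℓ (θ * β) < 0 → 0 < -(fDS P X ℓ (θ * β)) / θ ^ 2) := by
  intro β _ θ hθ
  have hθ2 : 0 < θ ^ 2 := by positivity
  set L := log (((ℓ : ℝ) - 1) * lam P X β)
  have hfun : (fun t => (1 / t) * log (rDS P X ℓ β t))
      = fun t => t⁻¹ * (annealedCP P X ℓ (t * β) - t * L) := by
    funext t
    rw [log_rDS hInt (by omega), one_div]
  have hinner : HasDerivAt (fun t => annealedCP P X ℓ (t * β) - t * L)
      (-(∫ ω, X ω * exp (-(θ * β) * X ω) ∂P) / lam P X (θ * β) * β - L) θ := by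
    exact ((hasDerivAt_annealedCP hInt ℓ (θ * β)).comp θ
      (hasDerivAt_mul_const β)).sub (hasDerivAt_mul_const L)
  refine ⟨?_, fun h => div_neg_of_neg_of_pos (by linarith) hθ2, fun h => by simp [h],
    fun h => div_pos (by linarith) hθ2⟩
  rw [hfun]
  refine ((hasDerivAt_inv hθ.ne').fun_mul hinner).congr_deriv ?_
  unfold fDS
  field_simp
  ring

/-- For `β > 0` and `θ > 0`, `θ ↦ (1/θ)·log r(θ)` is differentiable at `θ` with derivative
`-f(θβ)/θ²`, which is negative, zero, or positive according to the sign of `f(θβ)`. -/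
theorem hasDerivAt_inv_log_rDS {Ω : Type*} [MeasurableSpace Ω] (P : Measure Ω)
    [IsProbabilityMeasure P] (X : Ω → ℝ) (hX : Measurable X)
    (hInt : ∀ s : ℝ, Integrable (fun ω => Real.exp (-s * X ω)) P)
    (ℓ : ℕ) (hℓ : 3 ≤ ℓ) :
    ∀ β : ℝ, 0 < β → ∀ θ : ℝ, 0 < θ →
      HasDerivAt (fun t => (1 / t) * Real.log (rDS P X ℓ β t))
        (-(fDS P X ℓ (θ * β)) / θ ^ 2) θ ∧
      (0 < fDS P X ℓ (θ * β) → -(fDS P X ℓ (θ * β)) / θ ^ 2 < 0) ∧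
      (fDS P X ℓ (θ * β) = 0 → -(fDS P X ℓ (θ * β)) / θ ^ 2 = 0) ∧
      (fDS P X ℓ (θ * β) < 0 → 0 < -(fDS P X ℓ (θ * β)) / θ ^ 2) :=
  hasDerivAt_inv_log_rDS_general P X hInt ℓ hℓ
end

section
/- Suppose X is not ℙ-almost surely constant, β_c > 0 satisfies f(β_c) = 0, and β > β_c. Set θ_c = β_c/β. Then θ_c minimizes θ ↦ (1/θ)·log r(θ) over (0,∞): for all θ > 0, (1/θ_c)·log r(θ_c) ≤ (1/θ)·log r(θ). Moreover h_a(β) + (1/θ_c)·log r(θ_c) = (β/β_c)·h_a(β_c). -/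
open MeasureTheory Real

/-!
Writing `s = θβ`, one has `log r(θ) = h_a(θβ) - θ h_a(β)`, so minimizing `(1/θ) log r(θ)` means
minimizing the slope `h_a(s)/s`. The condition `f(β_c) = 0` says that the tangent to the convex
function `h_a` at `β_c` passes through the origin; since `h_a` lies above its tangents
(pointwise `e^t ≥ 1 + t`), `h_a(s)/s ≥ h_a(β_c)/β_c` for every `s > 0`.
-/

section Tangent

variable {Ω : Type*} [MeasurableSpace Ω] (P : Measure Ω) (X : Ω → ℝ)

lemma integrable_mul_exp_neg_mul (hX : Measurable X)
    (hInt : ∀ s : ℝ, Integrable (fun ω => exp (-s * X ω)) P) (b : ℝ) :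
    Integrable (fun ω => X ω * exp (-b * X ω)) P := by
  refine ((hInt (b - 1)).add (hInt (b + 1))).mono'
    (hX.mul (hX.const_mul (-b)).exp).aestronglyMeasurable (ae_of_all _ fun ω => ?_)
  have habs : |X ω| ≤ exp (X ω) + exp (-X ω) := by
    rcases abs_cases (X ω) with ⟨h, _⟩ | ⟨h, _⟩ <;> rw [h]
    · nlinarith [add_one_le_exp (X ω), exp_pos (-X ω)]
    · nlinarith [add_one_le_exp (-X ω), exp_pos (X ω)]
  calc ‖X ω * exp (-b * X ω)‖ = |X ω| * exp (-b * X ω) := by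
        rw [norm_mul, norm_eq_abs, norm_of_nonneg (exp_pos _).le]
    _ ≤ (exp (X ω) + exp (-X ω)) * exp (-b * X ω) := by gcongr
    _ = exp (-(b - 1) * X ω) + exp (-(b + 1) * X ω) := by
        rw [add_mul, ← exp_add, ← exp_add]; ring_nf

/-- Integrated form of `e^t ≥ e^m (1 + t - m)` with `t = -(s - b) X`, against the weight
`e^{-bX}`. -/
lemma exp_mul_le_lam (hX : Measurable X)
    (hInt : ∀ s : ℝ, Integrable (fun ω => exp (-s * X ω)) P) (b s m : ℝ) :
    exp m * ((1 - m) * lam P X b - (s - b) * ∫ ω, X ω * exp (-b * X ω) ∂P) ≤ lam P X s := by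
  have hb := hInt b
  have hXb := integrable_mul_exp_neg_mul P X hX hInt b
  have hpointwise : ∀ ω, exp m * ((1 - m) * exp (-b * X ω) - (s - b) * (X ω * exp (-b * X ω)))
      ≤ exp (-s * X ω) := by
    intro ω
    have h := add_one_le_exp (-(s - b) * X ω - m)
    calc exp m * ((1 - m) * exp (-b * X ω) - (s - b) * (X ω * exp (-b * X ω)))
        = exp m * (-(s - b) * X ω - m + 1) * exp (-b * X ω) := by ring
      _ ≤ exp m * exp (-(s - b) * X ω - m) * exp (-b * X ω) := by gcongr
      _ = exp (-s * X ω) := by rw [← exp_add, ← exp_add]; ring_nf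
  calc exp m * ((1 - m) * lam P X b - (s - b) * ∫ ω, X ω * exp (-b * X ω) ∂P)
      = ∫ ω, exp m * ((1 - m) * exp (-b * X ω) - (s - b) * (X ω * exp (-b * X ω))) ∂P := by
        rw [integral_const_mul, integral_sub (hb.const_mul _) (hXb.const_mul _),
          integral_const_mul, integral_const_mul, lam]
    _ ≤ lam P X s := integral_mono (((hb.const_mul _).sub (hXb.const_mul _)).const_mul _)
        (hInt s) hpointwise

variable [NeZero P]

lemma lam_pos (hInt : ∀ s : ℝ, Integrable (fun ω => exp (-s * X ω)) P) (s : ℝ) :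
    0 < lam P X s :=
  integral_exp_pos (hInt s)

/-- The tangent line to `h_a` at `b`, evaluated at `s`, is `f(b) - s 𝔼[X e^{-bX}]/λ_b`. -/
lemma fDS_sub_le_annealedCP (hX : Measurable X)
    (hInt : ∀ s : ℝ, Integrable (fun ω => exp (-s * X ω)) P) (ℓ : ℕ) (b s : ℝ) :
    fDS P X ℓ b - s * (∫ ω, X ω * exp (-b * X ω) ∂P) / lam P X b ≤ annealedCP P X ℓ s := by
  set I := ∫ ω, X ω * exp (-b * X ω) ∂P
  have hb := lam_pos P X hInt b
  have hkey := exp_mul_le_lam P X hX hInt b s (-((s - b) * I) / lam P X b)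
  have hsimp : (1 - -((s - b) * I) / lam P X b) * lam P X b - (s - b) * I = lam P X b := by
    field_simp; ring
  rw [hsimp] at hkey
  have hlog := log_le_log (by positivity) hkey
  rw [log_mul (exp_pos _).ne' hb.ne', log_exp] at hlog
  unfold fDS annealedCP
  have hquot : b * I / lam P X b - s * I / lam P X b = -((s - b) * I) / lam P X b := by ring
  linarith

lemma mul_annealedCP_div_le_of_fDS_eq_zero (hX : Measurable X)
    (hInt : ∀ s : ℝ, Integrable (fun ω => exp (-s * X ω)) P) (ℓ : ℕ) {b : ℝ} (hb : b ≠ 0)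
    (hf : fDS P X ℓ b = 0) (s : ℝ) :
    s * (annealedCP P X ℓ b / b) ≤ annealedCP P X ℓ s := by
  set I := ∫ ω, X ω * exp (-b * X ω) ∂P
  have hslope : annealedCP P X ℓ b / b = -(I / lam P X b) := by
    rw [div_eq_iff hb]
    unfold fDS at hf
    linear_combination hf
  have htangent := fDS_sub_le_annealedCP P X hX hInt ℓ b s
  rw [hf] at htangent
  calc s * (annealedCP P X ℓ b / b) = 0 - s * I / lam P X b := by rw [hslope]; ring
    _ ≤ annealedCP P X ℓ s := htangent

lemma log_rDS (hInt : ∀ s : ℝ, Integrable (fun ω => exp (-s * X ω)) P)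
    {ℓ : ℕ} (hℓ : 2 ≤ ℓ) (β θ : ℝ) :
    log (rDS P X ℓ β θ) = annealedCP P X ℓ (θ * β) - θ * annealedCP P X ℓ β := by
  have hℓ1 : (0 : ℝ) < ℓ - 1 := by
    have : (2 : ℝ) ≤ ℓ := by exact_mod_cast hℓ
    linarith
  have hβ := lam_pos P X hInt β
  have hc : 0 < ((ℓ : ℝ) - 1) * lam P X β := mul_pos hℓ1 hβ
  have hr : rDS P X ℓ β θ = (ℓ - 1) * (lam P X (θ * β) / (((ℓ : ℝ) - 1) * lam P X β) ^ θ) := by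
    have hpow : ∀ ω, (exp (-β * X ω) / (((ℓ : ℝ) - 1) * lam P X β)) ^ θ
        = exp (-(θ * β) * X ω) / (((ℓ : ℝ) - 1) * lam P X β) ^ θ := fun ω => by
      rw [div_rpow (exp_pos _).le hc.le, ← exp_mul]; ring_nf
    rw [rDS]; simp_rw [hpow]; rw [integral_div]; rfl
  rw [hr, log_mul hℓ1.ne' (by have := lam_pos P X hInt (θ * β); positivity),
    log_div (lam_pos P X hInt _).ne' (rpow_pos_of_pos hc θ).ne', log_rpow hc,
    log_mul hℓ1.ne' hβ.ne', annealedCP, annealedCP]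
  ring

end Tangent

theorem thetac_minimizes_general {Ω : Type*} [MeasurableSpace Ω] (P : Measure Ω)
    [IsProbabilityMeasure P] (X : Ω → ℝ) (hX : Measurable X)
    (hInt : ∀ s : ℝ, Integrable (fun ω => Real.exp (-s * X ω)) P)
    (ℓ : ℕ) (hℓ : 3 ≤ ℓ)
    (βc β : ℝ) (hβc : 0 < βc) (hfβc : fDS P X ℓ βc = 0) (hβ : βc < β) :
    (∀ θ : ℝ, 0 < θ →
      (1 / (βc / β)) * Real.log (rDS P X ℓ β (βc / β)) ≤ (1 / θ) * Real.log (rDS P X ℓ β θ)) ∧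
    annealedCP P X ℓ β + (1 / (βc / β)) * Real.log (rDS P X ℓ β (βc / β))
      = (β / βc) * annealedCP P X ℓ βc := by
  have hβ0 : β ≠ 0 := (hβc.trans hβ).ne'
  have hlog := log_rDS P X hInt (by omega : 2 ≤ ℓ) β
  have hθc : 1 / (βc / β) * log (rDS P X ℓ β (βc / β)) = β * (annealedCP P X ℓ βc / βc) - annealedCP P X ℓ β := by
    rw [hlog, div_mul_cancel₀ βc hβ0]
    field_simp
  refine ⟨fun θ hθ => ?_, by rw [hθc]; field_simp; ring⟩
  have hline := mul_annealedCP_div_le_of_fDS_eq_zero P X hX hInt ℓ hβc.ne' hfβc (θ * β)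
  have hθ' : 1 / θ * log (rDS P X ℓ β θ) = annealedCP P X ℓ (θ * β) / θ - annealedCP P X ℓ β := by
    rw [hlog]; field_simp
  rw [hθc, hθ', sub_le_sub_iff_right, le_div_iff₀ hθ]
  linarith

/-- In the strong disorder regime `β > β_c` (where `f(β_c) = 0`), `θ_c = β_c/β` minimizes
`θ ↦ (1/θ)·log r(θ)` over `(0,∞)`, and `h_a(β) + (1/θ_c)·log r(θ_c) = (β/β_c)·h_a(β_c)`. -/
theorem thetac_minimizes {Ω : Type*} [MeasurableSpace Ω] (P : Measure Ω)
    [IsProbabilityMeasure P] (X : Ω → ℝ) (hX : Measurable X)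
    (hInt : ∀ s : ℝ, Integrable (fun ω => Real.exp (-s * X ω)) P)
    (ℓ : ℕ) (hℓ : 3 ≤ ℓ)
    (hconst : ¬ ∃ c : ℝ, ∀ᵐ ω ∂P, X ω = c)
    (βc β : ℝ) (hβc : 0 < βc) (hfβc : fDS P X ℓ βc = 0) (hβ : βc < β) :
    (∀ θ : ℝ, 0 < θ →
      (1 / (βc / β)) * Real.log (rDS P X ℓ β (βc / β)) ≤ (1 / θ) * Real.log (rDS P X ℓ β θ)) ∧
    annealedCP P X ℓ β + (1 / (βc / β)) * Real.log (rDS P X ℓ β (βc / β))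
      = (β / βc) * annealedCP P X ℓ βc :=
  thetac_minimizes_general P X hX hInt ℓ hℓ βc β hβc hfβc hβ
end

section
/- Suppose X is not ℙ-almost surely constant, β_c > 0 satisfies f(β_c) = 0 (so that f(β) < 0 for β > β_c), and β > β_c. Set θ_c = β_c/β ∈ (0,1). Then r(θ_c) < 1, and consequently (β/β_c)·h_a(β_c) < h_a(β), i.e. in the strong disorder regime the quenched critical value is strictly below the annealed critical point. -/
/-!
Since `f(t) = h_a(t) - t h_a'(t)`, the derivative of `t ↦ h_a(t)/t` is `-f(t)/t² > 0` for
`t > β_c`, so `h_a(β_c)/β_c < h_a(β)/β`. On the other hand `r(θ) = exp(h_a(θβ) - θ h_a(β))`,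
because `(e^{-βX})^θ = e^{-θβX}`; at `θ = β_c/β` the exponent is
`β_c (h_a(β_c)/β_c - h_a(β)/β) < 0`.
-/

open MeasureTheory Real

open ProbabilityTheory Set

theorem strictMonoOn_div_id_of_lt_mul_deriv {h h' : ℝ → ℝ} {D : Set ℝ} (hD : Convex ℝ D)
    (hD_pos : ∀ t ∈ D, 0 < t) (hderiv : ∀ t ∈ D, HasDerivAt h (h' t) t)
    (hlt : ∀ t ∈ interior D, h t < t * h' t) :
    StrictMonoOn (fun t => h t / t) D := by
  have hquot : ∀ t ∈ D, HasDerivAt (fun t => h t / t) ((h' t * t - h t * 1) / t ^ 2) t :=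
    fun t ht => (hderiv t ht).div (hasDerivAt_id t) (hD_pos t ht).ne'
  refine strictMonoOn_of_deriv_pos hD
    (fun t ht => (hquot t ht).continuousAt.continuousWithinAt) fun t ht => ?_
  have htD := interior_subset ht
  have ht_pos := hD_pos t htD
  have := hlt t ht
  rw [(hquot t htD).deriv]
  exact div_pos (by linarith) (by positivity)

section Laplace

variable {Ω : Type*} [MeasurableSpace Ω] {P : Measure Ω} {X : Ω → ℝ}

theorem fDS_eq_sub_mul_deriv (ℓ : ℕ) (β : ℝ) :
    fDS P X ℓ β = annealedCP P X ℓ β - β * (-(∫ ω, X ω * exp (-β * X ω) ∂P) / lam P X β) := by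
  rw [fDS]; ring

variable (hInt : ∀ s : ℝ, Integrable (fun ω => exp (-s * X ω)) P)
include hInt

theorem hasDerivAt_lam (β : ℝ) :
    HasDerivAt (lam P X) (-∫ ω, X ω * exp (-β * X ω) ∂P) β := by
  have hset : integrableExpSet X P = univ :=
    eq_univ_of_forall fun t => by simpa [integrableExpSet] using hInt (-t)
  have hmgf := hasDerivAt_mgf (X := X) (μ := P) (t := -β) (by simp [hset])
  have hcomp : HasDerivAt (mgf X P ∘ Neg.neg) _ β := hmgf.comp β (hasDerivAt_neg β)
  rwa [mul_neg_one] at hcomp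

variable [IsProbabilityMeasure P]

theorem lam_pos_s7 (β : ℝ) : 0 < lam P X β := mgf_pos (hInt β)

theorem hasDerivAt_annealedCP (ℓ : ℕ) (β : ℝ) :
    HasDerivAt (annealedCP P X ℓ) (-(∫ ω, X ω * exp (-β * X ω) ∂P) / lam P X β) β :=
  ((hasDerivAt_lam hInt β).log (lam_pos_s7 hInt β).ne').const_add _

theorem rDS_eq_exp {ℓ : ℕ} (hℓ : 1 < ℓ) (β θ : ℝ) :
    rDS P X ℓ β θ = exp (annealedCP P X ℓ (θ * β) - θ * annealedCP P X ℓ β) := by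
  have hℓ' : (0 : ℝ) < ℓ - 1 := by
    have : (1 : ℝ) < ℓ := by exact_mod_cast hℓ
    linarith
  have hC : 0 < (ℓ - 1) * lam P X β := mul_pos hℓ' (lam_pos_s7 hInt β)
  have hpow : ∀ ω, (exp (-β * X ω) / ((ℓ - 1) * lam P X β)) ^ θ =
      exp (-(θ * β) * X ω) / ((ℓ - 1) * lam P X β) ^ θ := fun ω => by
    rw [div_rpow (exp_pos _).le hC.le, ← exp_mul]
    ring_nf
  rw [rDS, funext hpow, integral_div, ← lam, annealedCP, annealedCP,
    ← log_mul hℓ'.ne' (lam_pos_s7 hInt _).ne', ← log_mul hℓ'.ne' (lam_pos_s7 hInt _).ne', exp_sub,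
    exp_log (mul_pos hℓ' (lam_pos_s7 hInt _)), rpow_def_of_pos hC, mul_comm (log _) θ]
  ring

end Laplace

theorem quenched_lt_annealed_general {Ω : Type*} [MeasurableSpace Ω] (P : Measure Ω)
    [IsProbabilityMeasure P] (X : Ω → ℝ)
    (hInt : ∀ s : ℝ, Integrable (fun ω => Real.exp (-s * X ω)) P)
    (ℓ : ℕ) (hℓ : 3 ≤ ℓ)
    (βc β : ℝ) (hβc : 0 < βc)
    (hstrict : ∀ β' : ℝ, βc < β' → fDS P X ℓ β' < 0) (hβ : βc < β) :
    0 < βc / β ∧ βc / β < 1 ∧ rDS P X ℓ β (βc / β) < 1 ∧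
      (β / βc) * annealedCP P X ℓ βc < annealedCP P X ℓ β := by
  have hβ_pos : 0 < β := hβc.trans hβ
  have hmono : annealedCP P X ℓ βc / βc < annealedCP P X ℓ β / β := by
    refine strictMonoOn_div_id_of_lt_mul_deriv (convex_Icc βc β)
      (fun t ht => hβc.trans_le ht.1) (fun t _ => hasDerivAt_annealedCP hInt ℓ t) (fun t ht => ?_)
      (left_mem_Icc.2 hβ.le) (right_mem_Icc.2 hβ.le) hβ
    rw [interior_Icc] at ht
    have hf := hstrict t ht.1
    rw [fDS_eq_sub_mul_deriv] at hf
    linarith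
  rw [div_lt_div_iff₀ hβc hβ_pos] at hmono
  refine ⟨div_pos hβc hβ_pos, (div_lt_one hβ_pos).2 hβ, ?_, ?_⟩
  · rw [rDS_eq_exp hInt (by omega), div_mul_cancel₀ _ hβ_pos.ne', exp_lt_one_iff, sub_neg,
      div_mul_eq_mul_div, lt_div_iff₀ hβ_pos]
    linarith
  · rw [div_mul_eq_mul_div, div_lt_iff₀ hβc]
    linarith

/-- In the strong disorder regime `β > β_c`, with `θ_c = β_c/β ∈ (0,1)` one has `r(θ_c) < 1`,
and hence the quenched critical value `(β/β_c)·h_a(β_c)` is strictly below the annealed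
critical point `h_a(β)`. -/
theorem quenched_lt_annealed {Ω : Type*} [MeasurableSpace Ω] (P : Measure Ω)
    [IsProbabilityMeasure P] (X : Ω → ℝ) (hX : Measurable X)
    (hInt : ∀ s : ℝ, Integrable (fun ω => Real.exp (-s * X ω)) P)
    (ℓ : ℕ) (hℓ : 3 ≤ ℓ)
    (hconst : ¬ ∃ c : ℝ, ∀ᵐ ω ∂P, X ω = c)
    (βc β : ℝ) (hβc : 0 < βc) (hfβc : fDS P X ℓ βc = 0)
    (hstrict : ∀ β' : ℝ, βc < β' → fDS P X ℓ β' < 0) (hβ : βc < β) :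
    0 < βc / β ∧ βc / β < 1 ∧ rDS P X ℓ β (βc / β) < 1 ∧
      (β / βc) * annealedCP P X ℓ βc < annealedCP P X ℓ β :=
  quenched_lt_annealed_general P X hInt ℓ hℓ βc β hβc hstrict hβ
end

section
/- For every θ ∈ (0,1] and every n ≥ 1, the fractional moment of the normalized partition function satisfies 𝔼[Z_n^θ] ≤ (ℓ/(ℓ−1))^{1−θ} · r(θ)^n, where r(θ) = (ℓ−1)·𝔼[(e^{-βX}/((ℓ−1)λ_β))^θ]. -/
/-! For θ ∈ (0,1] the map t ↦ t^θ is subadditive, so Z_n^θ is at most the sum, over the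
ℓ(ℓ-1)^{n-1} paths, of the θ-th powers of the normalized path weights. Each path has n distinct
edges, so by independence the θ-th power of its weight has expectation
(𝔼[e^{-βθX}])^n / (ℓ(ℓ-1)^{n-1} λ_β^n)^θ; summing over the paths and regrouping the constants
gives (ℓ/(ℓ-1))^{1-θ} r(θ)^n. -/

open MeasureTheory Real ProbabilityTheory

/-- A (nonempty) word indexing an edge of the rooted degree-`ℓ` tree: a first letter in
`Fin ℓ` together with a list of subsequent letters in `Fin (ℓ-1)`.  The `n`-step
self-avoiding paths from the root correspond to the words of length `n` (list length
`n-1`), and the edges along such a path are the nonempty prefixes of the word. -/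
abbrev TreeWord (ℓ : ℕ) : Type := Fin ℓ × List (Fin (ℓ - 1))

/-- The normalized partition function
`Z_n = (ℓ(ℓ-1)^{n-1} λ_β^n)⁻¹ Σ_{|w|=n} exp(-β Σ_{k=1}^n X_{(w_1,…,w_k)})`, with `Z_0 = 1`.
The inner sums run over the first letter `a : Fin ℓ` and the tail `g`, and the `k`-th edge
of the path `w = (a, List.ofFn g)` is the prefix `(a, (List.ofFn g).take (k-1))`. -/
noncomputable def Zpart {Ω : Type*} (ℓ : ℕ) (β lamβ : ℝ)
    (Xf : TreeWord ℓ → Ω → ℝ) : ℕ → Ω → ℝ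
  | 0 => fun _ => 1
  | n + 1 => fun ω =>
      ((ℓ : ℝ) * ((ℓ : ℝ) - 1) ^ n * lamβ ^ (n + 1))⁻¹ *
        ∑ a : Fin ℓ, ∑ g : Fin n → Fin (ℓ - 1),
          Real.exp (-β * ∑ k ∈ Finset.range (n + 1), Xf (a, (List.ofFn g).take k) ω)

theorem Real.rpow_sum_le_sum_rpow {ι : Type*} (s : Finset ι) {f : ι → ℝ} (hf : ∀ i ∈ s, 0 ≤ f i)
    {p : ℝ} (hp : 0 < p) (hp1 : p ≤ 1) :
    (∑ i ∈ s, f i) ^ p ≤ ∑ i ∈ s, f i ^ p :=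
  Finset.le_sum_of_subadditive_on_pred (· ^ p) (0 ≤ ·) (zero_rpow hp.ne').le
    (fun _ _ hx hy => rpow_add_le_add_rpow hx hy hp.le hp1) (fun _ _ => add_nonneg) f hf

namespace MeasureTheory

theorem integral_rpow_sum_le_sum_integral_rpow {Ω ι : Type*} [MeasurableSpace Ω]
    {P : Measure Ω} {p : ℝ} (s : Finset ι) {f : ι → Ω → ℝ} (hf : ∀ i ω, 0 ≤ f i ω)
    (hint : ∀ i ∈ s, Integrable (fun ω => f i ω ^ p) P) (hp : 0 < p) (hp1 : p ≤ 1) :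
    ∫ ω, (∑ i ∈ s, f i ω) ^ p ∂P ≤ ∑ i ∈ s, ∫ ω, f i ω ^ p ∂P := by
  rw [← integral_finsetSum s hint]
  exact integral_mono_of_nonneg
    (ae_of_all _ fun ω => rpow_nonneg (Finset.sum_nonneg fun i _ => hf i ω) p)
    (integrable_finsetSum s hint)
    (ae_of_all _ fun ω => rpow_sum_le_sum_rpow s (fun i _ => hf i ω) hp hp1)

end MeasureTheory

namespace ProbabilityTheory

variable {Ω ι : Type*} [MeasurableSpace Ω] {P : Measure Ω} {Y : ι → Ω → ℝ} {X : Ω → ℝ}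

theorem integral_exp_mul_sum_of_iIndepFun_of_identDistrib (hindep : iIndepFun Y P)
    (hident : ∀ i, IdentDistrib (Y i) X P P) (t : ℝ) (s : Finset ι) :
    ∫ ω, exp (t * ∑ i ∈ s, Y i ω) ∂P = mgf X P t ^ s.card := by
  have hmgf : ∀ i, mgf (Y i) P t = mgf X P t := fun i =>
    ((hident i).comp (measurable_const_mul t).exp).integral_eq
  simp_rw [← Finset.sum_apply]
  rw [← mgf, hindep.mgf_sum₀ (fun i => (hident i).aemeasurable_fst) s, Finset.prod_congr rfl
    fun i _ => hmgf i, Finset.prod_const]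

theorem integrable_exp_mul_sum_of_iIndepFun_of_identDistrib (hindep : iIndepFun Y P)
    (hident : ∀ i, IdentDistrib (Y i) X P P) {t : ℝ}
    (hX : Integrable (fun ω => exp (t * X ω)) P) (s : Finset ι) :
    Integrable (fun ω => exp (t * ∑ i ∈ s, Y i ω)) P := by
  have := hindep.isProbabilityMeasure
  refine Integrable.of_integral_ne_zero ?_
  rw [integral_exp_mul_sum_of_iIndepFun_of_identDistrib hindep hident]
  exact pow_ne_zero _ (mgf_pos hX).ne'

end ProbabilityTheory

section Paths

variable {ℓ m : ℕ}

def pathEdges (p : Fin ℓ × (Fin m → Fin (ℓ - 1))) : Finset (TreeWord ℓ) :=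
  (Finset.range (m + 1)).image fun k => (p.1, (List.ofFn p.2).take k)

theorem injOn_prefix (p : Fin ℓ × (Fin m → Fin (ℓ - 1))) :
    Set.InjOn (fun k => ((p.1, (List.ofFn p.2).take k) : TreeWord ℓ)) (Finset.range (m + 1)) := by
  intro j hj k hk hjk
  have hlen := congrArg (fun w : TreeWord ℓ => w.2.length) hjk
  simp only [List.length_take, List.length_ofFn] at hlen
  simp only [Finset.coe_range, Set.mem_Iio] at hj hk
  omega

theorem card_pathEdges (p : Fin ℓ × (Fin m → Fin (ℓ - 1))) : (pathEdges p).card = m + 1 := by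
  rw [pathEdges, Finset.card_image_of_injOn (injOn_prefix p), Finset.card_range]

theorem sum_pathEdges {M : Type*} [AddCommMonoid M] (p : Fin ℓ × (Fin m → Fin (ℓ - 1)))
    (f : TreeWord ℓ → M) :
    ∑ w ∈ pathEdges p, f w = ∑ k ∈ Finset.range (m + 1), f (p.1, (List.ofFn p.2).take k) :=
  Finset.sum_image (injOn_prefix p)

theorem Zpart_succ {Ω : Type*} (β lamβ : ℝ) (Xf : TreeWord ℓ → Ω → ℝ) (ω : Ω) :
    Zpart ℓ β lamβ Xf (m + 1) ω = ∑ p : Fin ℓ × (Fin m → Fin (ℓ - 1)),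
      ((ℓ : ℝ) * ((ℓ : ℝ) - 1) ^ m * lamβ ^ (m + 1))⁻¹ * exp (-β * ∑ w ∈ pathEdges p, Xf w ω) := by
  simp only [Zpart, sum_pathEdges, Fintype.sum_prod_type, Finset.mul_sum]

theorem card_paths (hℓ : 1 ≤ ℓ) :
    (Fintype.card (Fin ℓ × (Fin m → Fin (ℓ - 1))) : ℝ) = ℓ * ((ℓ : ℝ) - 1) ^ m := by
  simp [Nat.cast_sub hℓ]

end Paths

theorem rDS_eq_mgf {Ω : Type*} [MeasurableSpace Ω] (P : Measure Ω) (X : Ω → ℝ) {ℓ : ℕ}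
    (hℓ : 1 ≤ ℓ) (β θ : ℝ) :
    rDS P X ℓ β θ = ((ℓ : ℝ) - 1) * (mgf X P (-β * θ) / (((ℓ : ℝ) - 1) * lam P X β) ^ θ) := by
  have hℓ' : (0 : ℝ) ≤ ℓ - 1 := sub_nonneg.mpr (Nat.one_le_cast.mpr hℓ)
  have hlam : 0 ≤ lam P X β := integral_nonneg fun ω => (exp_pos _).le
  rw [rDS, mgf, ← integral_div]
  congr 2 with ω
  rw [div_rpow (exp_pos _).le (mul_nonneg hℓ' hlam), ← exp_mul, mul_right_comm]

theorem inv_rpow_mul_eq_div_rpow_mul_pow {L K A B θ : ℝ} (hL : 0 < L) (hK : 0 < K) (hA : 0 < A)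
    (hB : 0 < B) (m : ℕ) :
    (L * K ^ m * A ^ (m + 1))⁻¹ ^ θ * (L * K ^ m * B ^ (m + 1)) =
      (L / K) ^ (1 - θ) * (K * (B / (K * A) ^ θ)) ^ (m + 1) := by
  obtain ⟨L, rfl⟩ : ∃ x, exp x = L := ⟨log L, exp_log hL⟩
  obtain ⟨K, rfl⟩ : ∃ x, exp x = K := ⟨log K, exp_log hK⟩
  obtain ⟨A, rfl⟩ : ∃ x, exp x = A := ⟨log A, exp_log hA⟩
  obtain ⟨B, rfl⟩ : ∃ x, exp x = B := ⟨log B, exp_log hB⟩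
  simp only [div_eq_mul_inv, ← exp_nat_mul, ← exp_add, ← exp_neg, ← exp_mul, exp_eq_exp]
  push_cast
  ring

theorem fractional_moment_estimate_general {Ω : Type*} [MeasurableSpace Ω] (P : Measure Ω)
    [IsProbabilityMeasure P] (ℓ : ℕ) (hℓ : 3 ≤ ℓ) (β : ℝ) (hβ : 0 < β)
    (X : Ω → ℝ)
    (hInt : Integrable (fun ω => Real.exp (-β * X ω)) P)
    (Xf : TreeWord ℓ → Ω → ℝ)
    (hindep : iIndepFun Xf P)
    (hident : ∀ w, IdentDistrib (Xf w) X P P)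
    (θ : ℝ) (hθ : θ ∈ Set.Ioc (0 : ℝ) 1) (n : ℕ) :
    ∫ ω, (Zpart ℓ β (lam P X β) Xf n ω) ^ θ ∂P
      ≤ ((ℓ : ℝ) / ((ℓ : ℝ) - 1)) ^ (1 - θ) * (rDS P X ℓ β θ) ^ n := by
  obtain ⟨hθ0, hθ1⟩ := hθ
  have hℓ' : (2 : ℝ) ≤ ℓ := by exact_mod_cast (by omega : 2 ≤ ℓ)
  cases n with
  | zero =>
    simpa [Zpart] using one_le_rpow ((one_le_div (by linarith)).mpr (by linarith))
      (sub_nonneg.mpr hθ1)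
  | succ m =>
    set c := ((ℓ : ℝ) * ((ℓ : ℝ) - 1) ^ m * lam P X β ^ (m + 1))⁻¹
    have hlam : 0 < lam P X β := integral_exp_pos hInt
    have hc : 0 ≤ c := inv_nonneg.mpr <| mul_nonneg
      (mul_nonneg (by positivity) (pow_nonneg (by linarith) _)) (pow_nonneg hlam.le _)
    have hB : Integrable (fun ω => exp (-β * θ * X ω)) P :=
      integrable_exp_mul_of_nonpos_of_ge hInt (by nlinarith) (by nlinarith)
    have hpath : ∀ p : Fin ℓ × (Fin m → Fin (ℓ - 1)),
        (fun ω => (c * exp (-β * ∑ w ∈ pathEdges p, Xf w ω)) ^ θ) =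
          fun ω => c ^ θ * exp (-β * θ * ∑ w ∈ pathEdges p, Xf w ω) := fun p => by
      ext ω
      rw [mul_rpow hc (exp_pos _).le, ← exp_mul, mul_right_comm]
    simp_rw [Zpart_succ]
    calc ∫ ω, (∑ p, c * exp (-β * ∑ w ∈ pathEdges p, Xf w ω)) ^ θ ∂P
        ≤ ∑ p, ∫ ω, (c * exp (-β * ∑ w ∈ pathEdges p, Xf w ω)) ^ θ ∂P := by
          refine integral_rpow_sum_le_sum_integral_rpow _
            (fun p ω => mul_nonneg hc (exp_pos _).le) (fun p _ => ?_) hθ0 hθ1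
          rw [hpath]
          exact (integrable_exp_mul_sum_of_iIndepFun_of_identDistrib hindep hident hB _).const_mul _
      _ = ∑ _p : Fin ℓ × (Fin m → Fin (ℓ - 1)), c ^ θ * mgf X P (-β * θ) ^ (m + 1) := by
          simp_rw [hpath, integral_const_mul,
            integral_exp_mul_sum_of_iIndepFun_of_identDistrib hindep hident, card_pathEdges]
      _ = c ^ θ * (ℓ * ((ℓ : ℝ) - 1) ^ m * mgf X P (-β * θ) ^ (m + 1)) := by
          rw [Finset.sum_const, Finset.card_univ, nsmul_eq_mul, card_paths (by omega)]
          ring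
      _ = _ := by
          rw [rDS_eq_mgf P X (by omega)]
          exact inv_rpow_mul_eq_div_rpow_mul_pow (by linarith) (by linarith) hlam (mgf_pos hB) m

/-- Fractional moment estimate: for `θ ∈ (0,1]` and `n ≥ 1`,
`𝔼[Z_n^θ] ≤ (ℓ/(ℓ-1))^{1-θ} r(θ)^n`. -/
theorem fractional_moment_estimate {Ω : Type*} [MeasurableSpace Ω] (P : Measure Ω)
    [IsProbabilityMeasure P] (ℓ : ℕ) (hℓ : 3 ≤ ℓ) (β : ℝ) (hβ : 0 < β)
    (X : Ω → ℝ) (hX : Measurable X)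
    (hInt : Integrable (fun ω => Real.exp (-β * X ω)) P)
    (Xf : TreeWord ℓ → Ω → ℝ) (hXf : ∀ w, Measurable (Xf w))
    (hindep : iIndepFun Xf P)
    (hident : ∀ w, IdentDistrib (Xf w) X P P)
    (θ : ℝ) (hθ : θ ∈ Set.Ioc (0 : ℝ) 1) (n : ℕ) (hn : 1 ≤ n) :
    ∫ ω, (Zpart ℓ β (lam P X β) Xf n ω) ^ θ ∂P
      ≤ ((ℓ : ℝ) / ((ℓ : ℝ) - 1)) ^ (1 - θ) * (rDS P X ℓ β θ) ^ n :=
  fractional_moment_estimate_general P ℓ hℓ β hβ X hInt Xf hindep hident θ hθ n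
end

section
/- Fix θ ∈ (0,1] and suppose r(θ) > 0 and log r(θ) is finite. Then for every h > h_a(β) + (1/θ)·log r(θ), the quenched susceptibility is almost surely finite: ℙ(χ̂_h < ∞) = 1. In particular the quenched critical point is at most h_a(β) + (1/θ)·log r(θ) = h_a(β) − (1/θ)·log(1/r(θ)). -/
open MeasureTheory Real ProbabilityTheory

/-- The contribution to the quenched susceptibility of the `n`-step self-avoiding paths:
`Σ_{|w|=n} exp(-Σ_{k=1}^n (h + β X_{(w_1,…,w_k)}))`, the `n = 0` term being `1`. -/
noncomputable def suscTerm {Ω : Type*} (ℓ : ℕ) (β h : ℝ)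
    (Xf : TreeWord ℓ → Ω → ℝ) : ℕ → Ω → ℝ
  | 0 => fun _ => 1
  | n + 1 => fun ω =>
      ∑ a : Fin ℓ, ∑ g : Fin n → Fin (ℓ - 1),
        Real.exp (-∑ k ∈ Finset.range (n + 1), (h + β * Xf (a, (List.ofFn g).take k) ω))

/-- The quenched susceptibility `χ̂_h = Σ_{n≥0} Σ_{|w|=n} exp(-Σ_{k=1}^n (h + β X_w^{(k)}))`,
as a sum in `[0,∞]`. -/
noncomputable def susc {Ω : Type*} (ℓ : ℕ) (β h : ℝ)
    (Xf : TreeWord ℓ → Ω → ℝ) (ω : Ω) : ENNReal :=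
  ∑' n : ℕ, ENNReal.ofReal (suscTerm ℓ β h Xf n ω)

/-! For `θ ≤ 1` the map `x ↦ x ^ θ` is subadditive, so `χ̂_h ^ θ` is at most the sum over all
self-avoiding paths of the products of the weights `e^{-θ(h + βX_e)}` along the path. The edges of
a path carry independent weights, so the `n`-step paths contribute
`ℓ (ℓ-1)^{n-1} (e^{-θh} 𝔼[e^{-θβX}])^n` in expectation, and the condition on `h` is exactly
`(ℓ-1) e^{-θh} 𝔼[e^{-θβX}] < 1`. Hence `𝔼[χ̂_h ^ θ] < ∞`, and `χ̂_h < ∞` almost surely. -/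

open scoped ENNReal

namespace ENNReal

theorem rpow_sum_le_sum_rpow {ι : Type*} (s : Finset ι) (f : ι → ℝ≥0∞) {p : ℝ}
    (hp0 : 0 < p) (hp1 : p ≤ 1) : (∑ i ∈ s, f i) ^ p ≤ ∑ i ∈ s, f i ^ p :=
  Finset.le_sum_of_subadditive (· ^ p) (zero_rpow_of_pos hp0).le
    (fun a b => rpow_add_le_add_rpow a b hp0.le hp1) s f

theorem rpow_tsum_le_tsum_rpow {ι : Type*} (f : ι → ℝ≥0∞) {p : ℝ}
    (hp0 : 0 < p) (hp1 : p ≤ 1) : (∑' i, f i) ^ p ≤ ∑' i, f i ^ p := by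
  rw [ENNReal.tsum_eq_iSup_sum, ← orderIsoRpow_apply p hp0, OrderIso.map_iSup]
  exact iSup_le fun s => (rpow_sum_le_sum_rpow s f hp0 hp1).trans (ENNReal.sum_le_tsum s)

theorem tsum_ne_top_of_succ_le_geometric {a : ℕ → ℝ≥0∞} {C q : ℝ≥0∞} (h0 : a 0 ≠ ∞)
    (hC : C ≠ ∞) (hq : q < 1) (ha : ∀ n, a (n + 1) ≤ C * q ^ n) : ∑' n, a n ≠ ∞ := by
  rw [tsum_eq_zero_add' ENNReal.summable]
  refine add_ne_top.2 ⟨h0, ne_top_of_le_ne_top ?_ (ENNReal.tsum_le_tsum ha)⟩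
  rw [ENNReal.tsum_mul_left]
  exact mul_ne_top hC (tsum_geometric_lt_top.2 hq).ne

end ENNReal

section Probability

variable {Ω : Type*} [MeasurableSpace Ω] {P : Measure Ω}

theorem ae_tsum_lt_top_of_tsum_lintegral_rpow_ne_top {f : ℕ → Ω → ℝ≥0∞}
    (hf : ∀ n, AEMeasurable (f n) P) {p : ℝ} (hp0 : 0 < p) (hp1 : p ≤ 1)
    (h : ∑' n, ∫⁻ ω, f n ω ^ p ∂P ≠ ∞) : ∀ᵐ ω ∂P, ∑' n, f n ω < ∞ := by
  have hmeas : ∀ n, AEMeasurable (fun ω => f n ω ^ p) P := fun n => (hf n).pow_const p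
  have hfin := ae_lt_top' (AEMeasurable.tsum hmeas) (by rwa [lintegral_tsum hmeas])
  filter_upwards [hfin] with ω hω
  rw [← ENNReal.rpow_lt_top_iff_of_pos hp0]
  exact (ENNReal.rpow_tsum_le_tsum_rpow _ hp0 hp1).trans_lt hω

theorem lintegral_prod_comp_eq_pow {ι κ : Type*} {G : ι → Ω → ℝ≥0∞}
    (hG : ∀ i, Measurable (G i)) (hind : iIndepFun G P) {E : ℝ≥0∞}
    (hE : ∀ i, ∫⁻ ω, G i ω ∂P = E) {s : Finset κ} {p : κ → ι} (hp : Set.InjOn p s) :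
    ∫⁻ ω, ∏ k ∈ s, G (p k) ω ∂P = E ^ s.card := by
  classical
  simp_rw [fun ω => (Finset.prod_image (f := fun i => G i ω) hp).symm,
    lintegral_prod_eq_prod_lintegral_of_indepFun _ _ hind hG, hE, Finset.prod_const,
    Finset.card_image_of_injOn hp]

end Probability

noncomputable def pathProdSum (ℓ n : ℕ) (G : TreeWord ℓ → ℝ≥0∞) : ℝ≥0∞ :=
  ∑ a : Fin ℓ, ∑ g : Fin n → Fin (ℓ - 1), ∏ k ∈ Finset.range (n + 1), G (a, (List.ofFn g).take k)

section Tree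

variable {Ω : Type*} {ℓ : ℕ} {β h θ : ℝ} {Xf : TreeWord ℓ → Ω → ℝ}

theorem measurable_suscTerm [MeasurableSpace Ω] (hXf : ∀ w, Measurable (Xf w)) (n : ℕ) :
    Measurable (suscTerm ℓ β h Xf n) := by
  cases n with
  | zero => exact measurable_const
  | succ n =>
    refine Finset.measurable_sum _ fun a _ => Finset.measurable_sum _ fun g _ => ?_
    exact (Finset.measurable_sum _ fun k _ => ((hXf _).const_mul β).const_add h).neg.exp

theorem ofReal_suscTerm_succ_rpow_le (hθ0 : 0 < θ) (hθ1 : θ ≤ 1) (n : ℕ) (ω : Ω) :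
    ENNReal.ofReal (suscTerm ℓ β h Xf (n + 1) ω) ^ θ ≤
      pathProdSum ℓ n fun w => ENNReal.ofReal (exp (-(θ * (h + β * Xf w ω)))) := by
  simp only [suscTerm, pathProdSum]
  rw [ENNReal.ofReal_sum_of_nonneg fun a _ => Finset.sum_nonneg fun g _ => (exp_pos _).le]
  refine (ENNReal.rpow_sum_le_sum_rpow _ _ hθ0 hθ1).trans (Finset.sum_le_sum fun a _ => ?_)
  rw [ENNReal.ofReal_sum_of_nonneg fun g _ => (exp_pos _).le]
  refine (ENNReal.rpow_sum_le_sum_rpow _ _ hθ0 hθ1).trans (Finset.sum_le_sum fun g _ => ?_)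
  rw [ENNReal.ofReal_rpow_of_pos (exp_pos _), ← exp_mul, ← ENNReal.ofReal_prod_of_nonneg
    fun k _ => (exp_pos _).le, ← exp_sum, neg_mul, Finset.sum_mul, ← Finset.sum_neg_distrib]
  simp only [mul_comm _ θ, le_refl]

theorem lintegral_pathProdSum [MeasurableSpace Ω] {P : Measure Ω} {G : TreeWord ℓ → Ω → ℝ≥0∞}
    (hG : ∀ w, Measurable (G w)) (hind : iIndepFun G P) {E : ℝ≥0∞}
    (hE : ∀ w, ∫⁻ ω, G w ω ∂P = E) (n : ℕ) :
    ∫⁻ ω, pathProdSum ℓ n (fun w => G w ω) ∂P = ℓ * ((ℓ - 1 : ℕ) : ℝ≥0∞) ^ n * E ^ (n + 1) := by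
  have hprod_meas (a : Fin ℓ) (g : Fin n → Fin (ℓ - 1)) :
      Measurable fun ω => ∏ k ∈ Finset.range (n + 1), G (a, (List.ofFn g).take k) ω :=
    Finset.measurable_prod _ fun k _ => hG _
  have hprefix_inj (a : Fin ℓ) (g : Fin n → Fin (ℓ - 1)) :
      Set.InjOn (fun k => ((a, (List.ofFn g).take k) : TreeWord ℓ)) (Finset.range (n + 1)) := by
    intro k hk k' hk' heq
    have := congrArg (fun w : TreeWord ℓ => w.2.length) heq
    simp only [List.length_take, List.length_ofFn, Finset.coe_range, Set.mem_Iio] at this hk hk'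
    omega
  simp only [pathProdSum]
  rw [lintegral_finsetSum _ fun a _ => Finset.measurable_sum _ fun g _ => hprod_meas a g]
  simp_rw [lintegral_finsetSum _ fun g _ => hprod_meas _ g,
    lintegral_prod_comp_eq_pow hG hind hE (hprefix_inj _ _), Finset.card_range]
  simp only [Finset.sum_const, Finset.card_univ, Fintype.card_fun, Fintype.card_fin, nsmul_eq_mul,
    Nat.cast_pow]
  ring

theorem lintegral_ofReal_suscTerm_succ_rpow_le [MeasurableSpace Ω] {P : Measure Ω}
    {X : Ω → ℝ} (hXf : ∀ w, Measurable (Xf w))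
    (hindep : iIndepFun Xf P) (hident : ∀ w, IdentDistrib (Xf w) X P P)
    (hθ0 : 0 < θ) (hθ1 : θ ≤ 1) (n : ℕ) :
    ∫⁻ ω, ENNReal.ofReal (suscTerm ℓ β h Xf (n + 1) ω) ^ θ ∂P ≤
      ℓ * ((ℓ - 1 : ℕ) : ℝ≥0∞) ^ n *
        (∫⁻ ω, ENNReal.ofReal (exp (-(θ * (h + β * X ω)))) ∂P) ^ (n + 1) := by
  set u : ℝ → ℝ≥0∞ := fun x => ENNReal.ofReal (exp (-(θ * (h + β * x))))
  have hu : Measurable u := by fun_prop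
  calc ∫⁻ ω, ENNReal.ofReal (suscTerm ℓ β h Xf (n + 1) ω) ^ θ ∂P
      ≤ ∫⁻ ω, pathProdSum ℓ n (fun w => u (Xf w ω)) ∂P :=
        lintegral_mono (ofReal_suscTerm_succ_rpow_le hθ0 hθ1 n)
    _ = _ := lintegral_pathProdSum (fun w => hu.comp (hXf w))
        (hindep.comp (fun _ => u) fun _ => hu) (fun w => ((hident w).comp hu).lintegral_eq) n

end Tree

section Annealed

variable {Ω : Type*} [MeasurableSpace Ω] {P : Measure Ω} {X : Ω → ℝ} {ℓ : ℕ} {β θ : ℝ}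

theorem rDS_eq (hℓ : 1 ≤ ℓ) :
    rDS P X ℓ β θ =
      ((ℓ : ℝ) - 1) * (∫ ω, exp (-(θ * β) * X ω) ∂P) / (((ℓ : ℝ) - 1) * lam P X β) ^ θ := by
  have hℓ' : (0 : ℝ) ≤ (ℓ : ℝ) - 1 := by
    rw [sub_nonneg]
    exact_mod_cast hℓ
  have hlam : 0 ≤ lam P X β := integral_nonneg fun ω => (exp_pos _).le
  have hpow (ω : Ω) : (exp (-β * X ω) / (((ℓ : ℝ) - 1) * lam P X β)) ^ θ =
      exp (-(θ * β) * X ω) / (((ℓ : ℝ) - 1) * lam P X β) ^ θ := by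
    rw [div_rpow (exp_pos _).le (mul_nonneg hℓ' hlam), ← exp_mul]
    ring_nf
  simp_rw [rDS, hpow, integral_div, mul_div_assoc]

theorem sub_one_mul_exp_mul_integral_lt_one [IsProbabilityMeasure P] (hℓ : 2 ≤ ℓ)
    (hInt : Integrable (fun ω => exp (-β * X ω)) P)
    (hIntθ : Integrable (fun ω => exp (-(θ * β) * X ω)) P) (hθ : 0 < θ) {h : ℝ}
    (hh : annealedCP P X ℓ β + 1 / θ * log (rDS P X ℓ β θ) < h) :
    ((ℓ : ℝ) - 1) * (exp (-(θ * h)) * ∫ ω, exp (-(θ * β) * X ω) ∂P) < 1 := by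
  have hℓ' : (0 : ℝ) < (ℓ : ℝ) - 1 := by
    rw [sub_pos]
    exact_mod_cast hℓ
  have hlam : 0 < lam P X β := integral_exp_pos hInt
  have hlamθ : 0 < ∫ ω, exp (-(θ * β) * X ω) ∂P := integral_exp_pos hIntθ
  have hlog : annealedCP P X ℓ β + 1 / θ * log (rDS P X ℓ β θ) =
      log (((ℓ : ℝ) - 1) * ∫ ω, exp (-(θ * β) * X ω) ∂P) / θ := by
    rw [rDS_eq (by omega), log_div (by positivity) (by positivity), log_rpow (by positivity),
      annealedCP, log_mul hℓ'.ne' hlam.ne']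
    field_simp
    ring
  rw [hlog, div_lt_iff₀' hθ, log_lt_iff_lt_exp (by positivity)] at hh
  calc ((ℓ : ℝ) - 1) * (exp (-(θ * h)) * ∫ ω, exp (-(θ * β) * X ω) ∂P)
      = exp (-(θ * h)) * (((ℓ : ℝ) - 1) * ∫ ω, exp (-(θ * β) * X ω) ∂P) := by ring
    _ < exp (-(θ * h)) * exp (θ * h) := by gcongr
    _ = 1 := by rw [← exp_add, neg_add_cancel, exp_zero]

theorem lintegral_ofReal_exp_neg_mul (h : ℝ)
    (hIntθ : Integrable (fun ω => exp (-(θ * β) * X ω)) P) :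
    ∫⁻ ω, ENNReal.ofReal (exp (-(θ * (h + β * X ω)))) ∂P =
      ENNReal.ofReal (exp (-(θ * h)) * ∫ ω, exp (-(θ * β) * X ω) ∂P) := by
  have hsplit (ω : Ω) : exp (-(θ * (h + β * X ω))) = exp (-(θ * h)) * exp (-(θ * β) * X ω) := by
    rw [← exp_add]
    ring_nf
  simp_rw [hsplit]
  rw [← integral_const_mul, ofReal_integral_eq_lintegral_ofReal (hIntθ.const_mul _)
    (ae_of_all _ fun ω => by positivity)]

end Annealed

theorem quenched_susc_finite_general {Ω : Type*} [MeasurableSpace Ω] (P : Measure Ω)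
    [IsProbabilityMeasure P] (ℓ : ℕ) (hℓ : 3 ≤ ℓ) (β : ℝ)
    (X : Ω → ℝ)
    (θ : ℝ) (hθ : θ ∈ Set.Ioc (0 : ℝ) 1)
    (hInt : Integrable (fun ω => Real.exp (-β * X ω)) P)
    (hIntθ : Integrable (fun ω => Real.exp (-(θ * β) * X ω)) P)
    (Xf : TreeWord ℓ → Ω → ℝ) (hXf : ∀ w, Measurable (Xf w))
    (hindep : iIndepFun Xf P)
    (hident : ∀ w, IdentDistrib (Xf w) X P P) :
    ∀ h : ℝ, annealedCP P X ℓ β + (1 / θ) * Real.log (rDS P X ℓ β θ) < h →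
      P {ω | susc ℓ β h Xf ω < ⊤} = 1 := by
  intro h hh
  obtain ⟨hθ0, hθ1⟩ := hθ
  set E := ∫⁻ ω, ENNReal.ofReal (exp (-(θ * (h + β * X ω)))) ∂P
  have hE : E = ENNReal.ofReal (exp (-(θ * h)) * ∫ ω, exp (-(θ * β) * X ω) ∂P) :=
    lintegral_ofReal_exp_neg_mul h hIntθ
  have hq : ((ℓ - 1 : ℕ) : ℝ≥0∞) * E < 1 := by
    rw [hE, ← ENNReal.ofReal_natCast, ← ENNReal.ofReal_mul (Nat.cast_nonneg _),
      Nat.cast_sub (by omega), Nat.cast_one, ENNReal.ofReal_lt_one]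
    exact sub_one_mul_exp_mul_integral_lt_one (by omega) hInt hIntθ hθ0 hh
  have hsum : ∑' n, ∫⁻ ω, ENNReal.ofReal (suscTerm ℓ β h Xf n ω) ^ θ ∂P ≠ ⊤ := by
    refine ENNReal.tsum_ne_top_of_succ_le_geometric (C := ℓ * E) (by simp [suscTerm])
      (ENNReal.mul_ne_top (ENNReal.natCast_ne_top ℓ) (hE ▸ ENNReal.ofReal_ne_top)) hq fun n => ?_
    calc _ ≤ _ := lintegral_ofReal_suscTerm_succ_rpow_le hXf hindep hident hθ0 hθ1 n
      _ = _ := by ring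
  have hmeas (n : ℕ) : Measurable fun ω => ENNReal.ofReal (suscTerm ℓ β h Xf n ω) :=
    (measurable_suscTerm hXf n).ennreal_ofReal
  have hfin : ∀ᵐ ω ∂P, susc ℓ β h Xf ω < ⊤ :=
    ae_tsum_lt_top_of_tsum_lintegral_rpow_ne_top (fun n => (hmeas n).aemeasurable) hθ0 hθ1 hsum
  have hset : MeasurableSet {ω | susc ℓ β h Xf ω < ⊤} :=
    measurableSet_lt (Measurable.tsum hmeas) measurable_const
  rw [(ae_iff_measure_eq hset.nullMeasurableSet).1 hfin, measure_univ]

/-- Upper bound on the quenched critical point: for `θ ∈ (0,1]` with `r(θ) > 0`, the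
quenched susceptibility is a.s. finite for every `h > h_a(β) + (1/θ)·log r(θ)`. -/
theorem quenched_susc_finite {Ω : Type*} [MeasurableSpace Ω] (P : Measure Ω)
    [IsProbabilityMeasure P] (ℓ : ℕ) (hℓ : 3 ≤ ℓ) (β : ℝ) (hβ : 0 < β)
    (X : Ω → ℝ) (hX : Measurable X)
    (θ : ℝ) (hθ : θ ∈ Set.Ioc (0 : ℝ) 1)
    (hInt : Integrable (fun ω => Real.exp (-β * X ω)) P)
    (hIntθ : Integrable (fun ω => Real.exp (-(θ * β) * X ω)) P)
    (hr : 0 < rDS P X ℓ β θ)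
    (Xf : TreeWord ℓ → Ω → ℝ) (hXf : ∀ w, Measurable (Xf w))
    (hindep : iIndepFun Xf P)
    (hident : ∀ w, IdentDistrib (Xf w) X P P) :
    ∀ h : ℝ, annealedCP P X ℓ β + (1 / θ) * Real.log (rDS P X ℓ β θ) < h →
      P {ω | susc ℓ β h Xf ω < ⊤} = 1 :=
  quenched_susc_finite_general P ℓ hℓ β X θ hθ hInt hIntθ Xf hXf hindep hident
end

section
/- Suppose that Z_n converges ℙ-almost surely to a random variable Z_∞ with ℙ(Z_∞ > 0) = 1 (weak disorder). Then almost surely there exist constants 0 < c ≤ C < ∞ (depending on the realization) and h₀ > h_a(β) such that for all h ∈ (h_a(β), h₀): c/(h − h_a(β)) ≤ χ̂_h ≤ C/(h − h_a(β)). In particular the critical exponent of the quenched susceptibility equals 1 almost surely. -/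
open MeasureTheory Real ProbabilityTheory

/-- Weak disorder: if `Z_n → Z_∞ > 0` a.s., then almost surely the quenched susceptibility
satisfies `c/(h - h_a(β)) ≤ χ̂_h ≤ C/(h - h_a(β))` for all `h` slightly above `h_a(β)`;
i.e. the critical exponent of the quenched susceptibility is `1`. -/
theorem weak_disorder_critical_exponent {Ω : Type*} [MeasurableSpace Ω] (P : Measure Ω)
    [IsProbabilityMeasure P] (ℓ : ℕ) (hℓ : 3 ≤ ℓ) (β : ℝ) (hβ : 0 < β)
    (X : Ω → ℝ) (hX : Measurable X)
    (hInt : Integrable (fun ω => Real.exp (-β * X ω)) P)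
    (Xf : TreeWord ℓ → Ω → ℝ) (hXf : ∀ w, Measurable (Xf w))
    (Zinf : Ω → ℝ)
    (htends : ∀ᵐ ω ∂P, Filter.Tendsto (fun n => Zpart ℓ β (lam P X β) Xf n ω)
      Filter.atTop (nhds (Zinf ω)))
    (hpos : ∀ᵐ ω ∂P, 0 < Zinf ω) :
    ∀ᵐ ω ∂P, ∃ c C h₀ : ℝ, 0 < c ∧ c ≤ C ∧ annealedCP P X ℓ β < h₀ ∧
      ∀ h ∈ Set.Ioo (annealedCP P X ℓ β) h₀,
        ENNReal.ofReal (c / (h - annealedCP P X ℓ β)) ≤ susc ℓ β h Xf ω ∧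
        susc ℓ β h Xf ω ≤ ENNReal.ofReal (C / (h - annealedCP P X ℓ β)) := by
  classical
  have hLpos : (0:ℝ) < (ℓ:ℝ) - 1 := by
    have : (3:ℝ) ≤ (ℓ:ℝ) := by exact_mod_cast hℓ
    linarith
  have hlpos : (0:ℝ) < (ℓ:ℝ) := by linarith
  have hlam : 0 < lam P X β := by
    rw [lam, integral_pos_iff_support_of_nonneg (fun ω => (Real.exp_pos _).le) hInt]
    have hsupp : Function.support (fun ω => Real.exp (-β * X ω)) = Set.univ := by
      ext ω; simp [Function.mem_support, (Real.exp_pos (-β * X ω)).ne']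
    rw [hsupp]
    simp
  set ha := annealedCP P X ℓ β with hha
  have hexpha : ((ℓ:ℝ) - 1) * lam P X β = Real.exp ha := by
    rw [hha, annealedCP, Real.exp_add, Real.exp_log hLpos, Real.exp_log hlam]
  set K : ℝ := (ℓ:ℝ) / ((ℓ:ℝ) - 1) with hKdef
  have hK : 0 < K := by positivity
  haveI : Nonempty (Fin ℓ) := ⟨⟨0, by omega⟩⟩
  haveI : Nonempty (Fin (ℓ - 1)) := ⟨⟨0, by omega⟩⟩
  filter_upwards [htends, hpos] with ω hT hP
  set Z : ℕ → ℝ := fun n => Zpart ℓ β (lam P X β) Xf n ω with hZdef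
  have hZ0 : Z 0 = 1 := rfl
  have hZpos : ∀ n, 0 < Z n := by
    intro n
    cases n with
    | zero => rw [hZ0]; norm_num
    | succ n =>
      have hz : Z (n+1) = ((ℓ : ℝ) * ((ℓ : ℝ) - 1) ^ n * (lam P X β) ^ (n + 1))⁻¹ *
          ∑ a : Fin ℓ, ∑ g : Fin n → Fin (ℓ - 1),
            Real.exp (-β * ∑ k ∈ Finset.range (n + 1), Xf (a, (List.ofFn g).take k) ω) := rfl
      rw [hz]
      apply mul_pos (inv_pos.mpr (by positivity))
      apply Finset.sum_pos _ Finset.univ_nonempty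
      intro a _
      apply Finset.sum_pos _ Finset.univ_nonempty
      intro g _
      exact Real.exp_pos _
  obtain ⟨Mi, hMi⟩ := (hT.inv₀ hP.ne').bddAbove_range
  obtain ⟨M, hM⟩ := hT.bddAbove_range
  have hMiZ : ∀ n, (Z n)⁻¹ ≤ Mi := fun n => hMi ⟨n, rfl⟩
  have hMZ : ∀ n, Z n ≤ M := fun n => hM ⟨n, rfl⟩
  have hMi0 : 0 < Mi := lt_of_lt_of_le (by rw [hZ0]; norm_num) (hMiZ 0)
  have hM1 : (1:ℝ) ≤ M := by have := hMZ 0; rwa [hZ0] at this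
  have hm : ∀ n, Mi⁻¹ ≤ Z n := by
    intro n
    have h1 := inv_anti₀ (inv_pos.mpr (hZpos n)) (hMiZ n)
    rwa [inv_inv] at h1
  have key : ∀ (h : ℝ) (n : ℕ), suscTerm ℓ β h Xf (n+1) ω
      = K * Real.exp (-(h - ha)) ^ (n+1) * Z (n+1) := by
    intro h n
    have hD : (0:ℝ) < (ℓ:ℝ) * ((ℓ:ℝ)-1) ^ n * (lam P X β) ^ (n+1) := by positivity
    have hterm : ∀ (a : Fin ℓ) (g : Fin n → Fin (ℓ - 1)),
        Real.exp (-∑ k ∈ Finset.range (n+1), (h + β * Xf (a, (List.ofFn g).take k) ω))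
        = Real.exp (-(((n:ℝ)+1) * h)) *
          Real.exp (-β * ∑ k ∈ Finset.range (n+1), Xf (a, (List.ofFn g).take k) ω) := by
      intro a g
      rw [← Real.exp_add]
      congr 1
      rw [Finset.sum_add_distrib, Finset.sum_const, Finset.card_range, ← Finset.mul_sum,
        nsmul_eq_mul]
      push_cast
      ring
    have hsum : suscTerm ℓ β h Xf (n+1) ω
        = Real.exp (-(((n:ℝ)+1) * h)) * (∑ a : Fin ℓ, ∑ g : Fin n → Fin (ℓ-1),
            Real.exp (-β * ∑ k ∈ Finset.range (n+1), Xf (a, (List.ofFn g).take k) ω)) := by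
      show (∑ a : Fin ℓ, ∑ g : Fin n → Fin (ℓ-1),
          Real.exp (-∑ k ∈ Finset.range (n+1), (h + β * Xf (a, (List.ofFn g).take k) ω))) = _
      simp_rw [hterm, ← Finset.mul_sum]
    have hZeq : (∑ a : Fin ℓ, ∑ g : Fin n → Fin (ℓ-1),
            Real.exp (-β * ∑ k ∈ Finset.range (n+1), Xf (a, (List.ofFn g).take k) ω))
        = ((ℓ:ℝ) * ((ℓ:ℝ)-1) ^ n * (lam P X β) ^ (n+1)) * Z (n+1) := by
      have hz : Z (n+1) = ((ℓ : ℝ) * ((ℓ : ℝ) - 1) ^ n * (lam P X β) ^ (n + 1))⁻¹ *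
          ∑ a : Fin ℓ, ∑ g : Fin n → Fin (ℓ - 1),
            Real.exp (-β * ∑ k ∈ Finset.range (n + 1), Xf (a, (List.ofFn g).take k) ω) := rfl
      rw [hz, ← mul_assoc, mul_inv_cancel₀ hD.ne', one_mul]
    rw [hsum, hZeq, ← mul_assoc]
    congr 1
    have h1 : (ℓ:ℝ) * ((ℓ:ℝ)-1) ^ n * (lam P X β) ^ (n+1)
        = K * (((ℓ:ℝ)-1) * lam P X β) ^ (n+1) := by
      rw [mul_pow, hKdef]
      field_simp
      ring
    rw [h1, hexpha, ← Real.exp_nat_mul, ← Real.exp_nat_mul, mul_left_comm, ← Real.exp_add]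
    congr 2
    push_cast
    ring
  refine ⟨K * Mi⁻¹ * Real.exp (-1), 1 + K * M, ha + 1, by positivity, ?_, by linarith, ?_⟩
  · have hMiM : Mi⁻¹ * Real.exp (-1) ≤ M := by
      have h2 : Mi⁻¹ ≤ Z 0 := hm 0
      have h3 : Real.exp (-1) ≤ 1 := by
        rw [← Real.exp_zero]; exact Real.exp_le_exp.mpr (by norm_num)
      rw [hZ0] at h2
      nlinarith [inv_pos.mpr hMi0]
    nlinarith
  intro h hh
  have hε0 : 0 < h - ha := by linarith [hh.1]
  have hε1 : h - ha < 1 := by have := hh.2; linarith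
  set r := Real.exp (-(h - ha)) with hr
  have hr0 : 0 < r := Real.exp_pos _
  have hr1 : r < 1 := by
    rw [hr, ← Real.exp_zero]
    exact Real.exp_lt_exp.mpr (by linarith)
  have h1r : 0 < 1 - r := by linarith
  have hA : 1 - r ≤ h - ha := by
    have := Real.add_one_le_exp (-(h - ha))
    rw [← hr] at this
    linarith
  have hB : (h - ha) * r ≤ 1 - r := by
    have h2 := Real.add_one_le_exp (h - ha)
    have h4 : Real.exp (h - ha) * r = 1 := by
      rw [hr, ← Real.exp_add]; simp
    nlinarith
  set f : ℕ → ℝ := fun n => suscTerm ℓ β h Xf n ω with hf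
  have hf0 : f 0 = 1 := rfl
  have hfs : ∀ n, f (n+1) = K * r ^ (n+1) * Z (n+1) := by
    intro n
    rw [hr]
    exact key h n
  have hfpos : ∀ n, 0 ≤ f n := by
    intro n
    cases n with
    | zero => rw [hf0]; norm_num
    | succ n =>
      rw [hfs n]
      have := (hZpos (n+1)).le
      positivity
  have hgsum : Summable (fun n : ℕ => r ^ n) := summable_geometric_of_lt_one hr0.le hr1
  have hgsum1 : Summable (fun n : ℕ => r ^ (n+1)) := by
    simpa [pow_succ] using hgsum.mul_right r
  have hfsum : Summable f := by
    refine Summable.of_nonneg_of_le hfpos ?_ (hgsum.mul_left (max 1 (K * M)))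
    intro n
    cases n with
    | zero => simp [hf0]
    | succ n =>
      rw [hfs n]
      have h5 : K * r ^ (n+1) * Z (n+1) ≤ K * M * r ^ (n+1) := by
        have h6 := hMZ (n+1)
        have h7 : (0:ℝ) < r ^ (n+1) := pow_pos hr0 _
        have h8 := mul_le_mul_of_nonneg_left (mul_le_mul_of_nonneg_right h6 h7.le) hK.le
        linarith [h8]
      calc K * r ^ (n+1) * Z (n+1) ≤ K * M * r ^ (n+1) := h5
        _ ≤ max 1 (K * M) * r ^ (n+1) := by
            have h8 : (0:ℝ) ≤ r ^ (n+1) := (pow_pos hr0 _).le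
            exact mul_le_mul_of_nonneg_right (le_max_right _ _) h8
  have hshift : Summable (fun n : ℕ => f (n+1)) := (summable_nat_add_iff 1).mpr hfsum
  have hTsum : ∑' n : ℕ, r ^ (n+1) = (1 - r)⁻¹ * r := by
    calc ∑' n : ℕ, r ^ (n+1) = ∑' n : ℕ, r ^ n * r := by simp [pow_succ]
      _ = (∑' n : ℕ, r ^ n) * r := tsum_mul_right
      _ = (1 - r)⁻¹ * r := by rw [tsum_geometric_of_lt_one hr0.le hr1]
  have hTlow : Real.exp (-1) / (h - ha) ≤ (1 - r)⁻¹ * r := by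
    rw [mul_comm, ← div_eq_mul_inv, div_le_div_iff₀ hε0 h1r]
    have h5 : Real.exp (-1) ≤ r := by
      rw [hr]; exact Real.exp_le_exp.mpr (by linarith)
    nlinarith
  have hThigh : (1 - r)⁻¹ * r ≤ 1 / (h - ha) := by
    rw [mul_comm, ← div_eq_mul_inv, div_le_div_iff₀ h1r hε0]
    nlinarith
  have hlow2 : K * Mi⁻¹ * ((1 - r)⁻¹ * r) ≤ ∑' n : ℕ, f (n+1) := by
    calc K * Mi⁻¹ * ((1 - r)⁻¹ * r) = ∑' n : ℕ, (K * Mi⁻¹) * r ^ (n+1) := by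
          rw [tsum_mul_left, hTsum]
      _ ≤ ∑' n : ℕ, f (n+1) := by
          apply Summable.tsum_le_tsum _ (hgsum1.mul_left _) hshift
          intro n
          rw [hfs n]
          have h9 := hm (n+1)
          have h7 : (0:ℝ) < r ^ (n+1) := pow_pos hr0 _
          have h8 := mul_le_mul_of_nonneg_left (mul_le_mul_of_nonneg_right h9 h7.le) hK.le
          linarith [h8]
  have hhigh2 : ∑' n : ℕ, f (n+1) ≤ K * M * ((1 - r)⁻¹ * r) := by
    calc ∑' n : ℕ, f (n+1) ≤ ∑' n : ℕ, (K * M) * r ^ (n+1) := by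
          apply Summable.tsum_le_tsum _ hshift (hgsum1.mul_left _)
          intro n
          rw [hfs n]
          have h9 := hMZ (n+1)
          have h7 : (0:ℝ) < r ^ (n+1) := pow_pos hr0 _
          have h8 := mul_le_mul_of_nonneg_left (mul_le_mul_of_nonneg_right h9 h7.le) hK.le
          linarith [h8]
      _ = K * M * ((1 - r)⁻¹ * r) := by rw [tsum_mul_left, hTsum]
  have hS : ∑' n : ℕ, f n = 1 + ∑' n : ℕ, f (n+1) := by
    rw [Summable.tsum_eq_zero_add hfsum, hf0]
  have hMpos : (0:ℝ) < M := lt_of_lt_of_le one_pos hM1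
  have hSlow : (K * Mi⁻¹ * Real.exp (-1)) / (h - ha) ≤ ∑' n : ℕ, f n := by
    rw [hS]
    have h10 : K * Mi⁻¹ * (Real.exp (-1) / (h - ha)) ≤ K * Mi⁻¹ * ((1 - r)⁻¹ * r) :=
      mul_le_mul_of_nonneg_left hTlow (by positivity)
    have h11 : (K * Mi⁻¹ * Real.exp (-1)) / (h - ha)
        = K * Mi⁻¹ * (Real.exp (-1) / (h - ha)) := by ring
    linarith
  have hShigh : ∑' n : ℕ, f n ≤ (1 + K * M) / (h - ha) := by
    rw [hS]
    have h10 : K * M * ((1 - r)⁻¹ * r) ≤ K * M * (1 / (h - ha)) :=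
      mul_le_mul_of_nonneg_left hThigh (by positivity)
    have h11 : (1:ℝ) ≤ 1 / (h - ha) := by
      rw [le_div_iff₀ hε0]; linarith
    have h12 : (1 + K * M) / (h - ha) = 1 / (h - ha) + K * M * (1 / (h - ha)) := by ring
    linarith
  have hsusc : susc ℓ β h Xf ω = ENNReal.ofReal (∑' n : ℕ, f n) := by
    rw [ENNReal.ofReal_tsum_of_nonneg hfpos hfsum]
    rfl
  exact ⟨by rw [hsusc]; exact ENNReal.ofReal_le_ofReal hSlow,
    by rw [hsusc]; exact ENNReal.ofReal_le_ofReal hShigh⟩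
end
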